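/- arXiv:2405.06963 — 6 statements merged into one kernel-verified Lean document; each statement's English description precedes it below -/
import Mathlib

section
/- Let E be a complex inner product space, let ψ and A be unit vectors in E, and let θ ∈ (0, π/2] be such that ⟪A, ψ⟫ = sin θ (a real number). Let J ∈ ℕ satisfy sin(π/(4J+6)) ≤ sin θ, and set φ := 2·arcsin( sin(π/(4J+6)) / sin θ ). Let L be Long's operator on E with marked vector A, reference vector ψ and phase φ. Then there exists c : ℂ with |c| = 1 such that L^(J+1) ψ = c • A. (Exact amplitude amplification: the phase-matched operator L with J+1 iterations rotates ψ exactly onto the marked direction A.) -/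
open scoped InnerProductSpace

/-- Long's operator `L = −(I + (e^{iφ}−1)|ψ⟩⟨ψ|)(I + (e^{iφ}−1)|A⟩⟨A|)` with marked
vector `A`, reference vector `ψ` and phase `φ`. -/
noncomputable def longOp {E : Type*} [NormedAddCommGroup E] [InnerProductSpace ℂ E]
    (A ψ : E) (φ : ℝ) : E → E := fun w =>
  let w' := w + (Complex.exp (Complex.I * φ) - 1) • ⟪A, w⟫_ℂ • A;
  -(w' + (Complex.exp (Complex.I * φ) - 1) • ⟪ψ, w'⟫_ℂ • ψ)

private lemma longT1 (x b : ℝ) :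
    Real.sin (x + 2*b) - Real.sin x = 2 * Real.sin b * Real.cos (x + b) := by
  rw [Real.sin_add, Real.cos_add, Real.sin_two_mul, Real.cos_two_mul]
  linear_combination 2 * Real.sin x * (Real.sin_sq_add_cos_sq b)

private lemma longT2 (x b : ℝ) :
    Real.cos (x + 3*b) = -2*Real.sin b * Real.sin x
      + (1 - 4*(Real.sin b)^2) * Real.cos (x + b) := by
  rw [Real.cos_add, Real.cos_add, Real.cos_three_mul, Real.sin_three_mul]
  linear_combination (4*Real.cos x*Real.cos b)*(Real.sin_sq_add_cos_sq b)

private lemma longT3 (x : ℝ) : Real.cos x = 1 - 2*Real.sin (x/2)^2 := by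
  have h2 := Real.cos_two_mul (x/2)
  rw [show 2*(x/2) = x by ring] at h2
  linear_combination h2 + 2*Real.sin_sq_add_cos_sq (x/2)

/-- Coefficient sequence of iterates of Long's operator in the (marked, reference) frame. -/
private noncomputable def longSeq (u ξ : ℂ) : ℕ → ℂ × ℂ
  | 0 => (0, 1)
  | j+1 => (-(u*(longSeq u ξ j).1) - ξ*(longSeq u ξ j).2,
            -(u*ξ*(longSeq u ξ j).1) - (u+ξ^2)*(longSeq u ξ j).2)

set_option maxHeartbeats 1000000 in
/-- Exact amplitude amplification: if `⟪A, ψ⟫ = sin θ` with `θ ∈ (0, π/2]`,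
`sin(π/(4J+6)) ≤ sin θ` and `φ = 2·arcsin(sin(π/(4J+6))/sin θ)`, then `J+1` iterations of
Long's phase-matched operator rotate `ψ` exactly onto the marked direction `A`. -/
theorem long_exact_amplitude_amplification
    {E : Type*} [NormedAddCommGroup E] [InnerProductSpace ℂ E]
    (A ψ : E) (hA : ‖A‖ = 1) (hψ : ‖ψ‖ = 1)
    (θ : ℝ) (hθ0 : 0 < θ) (hθ1 : θ ≤ Real.pi / 2)
    (hAψ : ⟪A, ψ⟫_ℂ = (Real.sin θ : ℂ))
    (J : ℕ) (hJ : Real.sin (Real.pi / (4 * J + 6)) ≤ Real.sin θ)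
    (φ : ℝ) (hφ : φ = 2 * Real.arcsin (Real.sin (Real.pi / (4 * J + 6)) / Real.sin θ)) :
    ∃ c : ℂ, ‖c‖ = 1 ∧ (longOp A ψ φ)^[J + 1] ψ = c • A := by
  have hπ := Real.pi_pos
  set s : ℝ := Real.sin θ with hs
  have hs0 : 0 < s := Real.sin_pos_of_pos_of_lt_pi hθ0 (by linarith)
  set β : ℝ := Real.pi / (4 * J + 6) with hβ
  have h46 : (0:ℝ) < 4 * J + 6 := by positivity
  have hβ0 : 0 < β := by positivity
  have hβ2 : β < Real.pi / 2 := by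
    rw [hβ, div_lt_div_iff₀ h46 two_pos]
    nlinarith [Nat.cast_nonneg (α := ℝ) J]
  have hsinβ : 0 < Real.sin β := Real.sin_pos_of_pos_of_lt_pi hβ0 (by linarith)
  have hcosβ : 0 < Real.cos β := Real.cos_pos_of_mem_Ioo ⟨by linarith, hβ2⟩
  have hsβs : Real.sin β ≤ s := hJ
  have hsinφ2 : Real.sin (φ / 2) * s = Real.sin β := by
    rw [hφ, show (2 * Real.arcsin (Real.sin β / s))/2 = Real.arcsin (Real.sin β / s) by ring,
      Real.sin_arcsin (by nlinarith [div_nonneg hsinβ.le hs0.le]) ((div_le_one hs0).2 hsβs)]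
    field_simp
  set u : ℂ := Complex.exp (Complex.I * φ) with hu
  have hu0 : u ≠ 0 := Complex.exp_ne_zero _
  have hunorm : ‖u‖ = 1 := by
    rw [hu, mul_comm, Complex.norm_exp_ofReal_mul_I]
  have huexp : u = (Real.cos φ : ℂ) + (Real.sin φ:ℂ) * Complex.I := by
    rw [hu, mul_comm, Complex.exp_mul_I, Complex.ofReal_cos, Complex.ofReal_sin]
  have hpyth : ((Real.cos φ:ℂ))^2 + ((Real.sin φ:ℂ))^2 = 1 := by
    norm_cast
    linarith [Real.sin_sq_add_cos_sq φ]
  set ξ : ℂ := (u - 1) * (s:ℂ) with hξ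
  have hξ2 : ξ^2 = -4 * u * ((Real.sin β : ℝ):ℂ)^2 := by
    have h1 : (u-1)^2 = u * (2*(Real.cos φ:ℂ) - 2) := by
      rw [huexp]
      linear_combination (-1:ℂ) * hpyth + ((Real.sin φ:ℂ)^2) * Complex.I_sq
    have h3 : Real.cos φ = 1 - 2*Real.sin (φ/2)^2 := longT3 φ
    have h4 : (Real.sin (φ/2))^2 * s^2 = (Real.sin β)^2 := by nlinarith [hsinφ2]
    have h4c : ((Real.sin (φ/2):ℂ))^2 * (s:ℂ)^2 = ((Real.sin β:ℂ))^2 := by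
      exact_mod_cast congrArg (fun x : ℝ => (x:ℂ)) h4
    rw [hξ, mul_pow, h1, h3]
    push_cast [← Complex.ofReal_sin]
    linear_combination (-4*u) * h4c
  set sb : ℂ := ((Real.sin β : ℝ) : ℂ) with hsb
  set cb : ℂ := ((Real.cos β : ℝ) : ℂ) with hcb
  have hsb0 : sb ≠ 0 := by rw [hsb]; exact_mod_cast hsinβ.ne'
  have hcb0 : cb ≠ 0 := by rw [hcb]; exact_mod_cast hcosβ.ne'
  -- closed forms (denominator-free)
  have claim : ∀ j : ℕ,
      (longSeq u ξ j).1 * (2*u*sb*cb) = (-1)^j * u^j * ξ * ((Real.sin (2*j*β) : ℝ):ℂ)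
      ∧ (longSeq u ξ j).2 * (cb * (2*sb)) =
          (-1)^j * u^j * ((Real.cos ((2*j+1)*β) : ℝ):ℂ) * (2*sb) := by
    intro j
    induction j with
    | zero =>
      constructor
      · simp [longSeq]
      · simp only [longSeq]
        rw [show (2*((0:ℕ):ℝ)+1)*β = β by push_cast; ring]
        rw [hcb]
        push_cast [-Complex.ofReal_sin, -Complex.ofReal_cos]
        ring
    | succ n ih =>
      obtain ⟨ihP, ihQ⟩ := ih
      have hT1 : Real.sin (2*((n:ℝ)+1)*β)
          = Real.sin (2*(n:ℝ)*β) + 2*Real.sin β*Real.cos ((2*(n:ℝ)+1)*β) := by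
        have h := longT1 (2*(n:ℝ)*β) β
        rw [show 2*(n:ℝ)*β + 2*β = 2*((n:ℝ)+1)*β by ring,
            show 2*(n:ℝ)*β + β = (2*(n:ℝ)+1)*β by ring] at h
        linarith
      have hT1c : ((Real.sin (2*((n:ℝ)+1)*β) : ℝ):ℂ)
          = ((Real.sin (2*(n:ℝ)*β) : ℝ):ℂ)
            + 2*sb*((Real.cos ((2*(n:ℝ)+1)*β) : ℝ):ℂ) := by
        rw [hsb]; exact_mod_cast congrArg (fun x : ℝ => (x:ℂ)) hT1
      have hT2 : Real.cos ((2*((n:ℝ)+1)+1)*β)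
          = -2*Real.sin β * Real.sin (2*(n:ℝ)*β)
            + (1 - 4*(Real.sin β)^2) * Real.cos ((2*(n:ℝ)+1)*β) := by
        have h := longT2 (2*(n:ℝ)*β) β
        rw [show 2*(n:ℝ)*β + 3*β = (2*((n:ℝ)+1)+1)*β by ring,
            show 2*(n:ℝ)*β + β = (2*(n:ℝ)+1)*β by ring] at h
        exact h
      have hT2c : ((Real.cos ((2*((n:ℝ)+1)+1)*β) : ℝ):ℂ)
          = -2*sb*((Real.sin (2*(n:ℝ)*β) : ℝ):ℂ)
            + (1 - 4*sb^2) * ((Real.cos ((2*(n:ℝ)+1)*β) : ℝ):ℂ) := by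
        rw [hsb]; exact_mod_cast congrArg (fun x : ℝ => (x:ℂ)) hT2
      constructor
      · show (-(u*(longSeq u ξ n).1) - ξ*(longSeq u ξ n).2) * (2*u*sb*cb) = _
        push_cast [-Complex.ofReal_sin, -Complex.ofReal_cos]
        rw [hT1c]
        linear_combination (-u) * ihP + (-(ξ*u)) * ihQ
      · show (-(u*ξ*(longSeq u ξ n).1) - (u+ξ^2)*(longSeq u ξ n).2) * (cb*(2*sb)) = _
        push_cast [-Complex.ofReal_sin, -Complex.ofReal_cos]
        rw [hT2c]
        linear_combination (-ξ) * ihP + (-(u+ξ^2)) * ihQ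
          + (-((-1)^n * u^n * (((Real.sin (2*(n:ℝ)*β) : ℝ):ℂ)
              + 2*sb*((Real.cos ((2*(n:ℝ)+1)*β) : ℝ):ℂ)))) * hξ2
  -- inner products
  have hAA : ⟪A, A⟫_ℂ = 1 := by
    rw [inner_self_eq_norm_sq_to_K, hA]; norm_num
  have hψψ : ⟪ψ, ψ⟫_ℂ = 1 := by
    rw [inner_self_eq_norm_sq_to_K, hψ]; norm_num
  have hψA : ⟪ψ, A⟫_ℂ = (s:ℂ) := by
    rw [← inner_conj_symm, hAψ, Complex.conj_ofReal]
  -- main induction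
  have main : ∀ j : ℕ, (longOp A ψ φ)^[j] ψ
      = (longSeq u ξ j).1 • A + (longSeq u ξ j).2 • ψ := by
    intro j
    induction j with
    | zero => simp [longSeq]
    | succ n ih =>
      rw [Function.iterate_succ_apply', ih]
      show longOp A ψ φ _ = _
      simp only [longOp, ← hu]
      simp only [inner_add_right, inner_smul_right, hAA, hAψ, hψA, hψψ, mul_one]
      show _ = (-(u*(longSeq u ξ n).1) - ξ*(longSeq u ξ n).2) • A
        + (-(u*ξ*(longSeq u ξ n).1) - (u+ξ^2)*(longSeq u ξ n).2) • ψ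
      rw [hξ]
      match_scalars <;> ring
  -- final step
  have hcast : (((J+1) : ℕ):ℝ) = (J:ℝ)+1 := by push_cast; ring
  have hβval : (2*((J:ℝ)+1)+1)*β = Real.pi/2 := by
    rw [hβ]; field_simp; ring
  have hQ0 : (longSeq u ξ (J+1)).2 = 0 := by
    have h := (claim (J+1)).2
    rw [hcast, hβval, Real.cos_pi_div_two] at h
    push_cast at h
    have hne : cb * (2*sb) ≠ 0 := mul_ne_zero hcb0 (mul_ne_zero two_ne_zero hsb0)
    have h0 : (longSeq u ξ (J+1)).2 * (cb * (2*sb)) = 0 := by rw [h]; ring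
    exact (mul_eq_zero.mp h0).resolve_right hne
  have hP1 := (claim (J+1)).1
  rw [hcast, show 2*((J:ℝ)+1)*β = (2*((J:ℝ)+1)+1)*β - β by ring, hβval,
    Real.sin_pi_div_two_sub, ← hcb] at hP1
  have hsbn : ‖sb‖ = Real.sin β := by
    rw [hsb, Complex.norm_real, Real.norm_eq_abs, abs_of_pos hsinβ]
  have hcbn : ‖cb‖ = Real.cos β := by
    rw [hcb, Complex.norm_real, Real.norm_eq_abs, abs_of_pos hcosβ]
  have hξn : ‖ξ‖ = 2 * Real.sin β := by
    have h2 : ‖ξ‖^2 = (2*Real.sin β)^2 := by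
      rw [← norm_pow, hξ2, norm_mul, norm_mul, norm_pow, hunorm, hsbn]
      norm_num
      ring
    rw [← Real.sqrt_sq (norm_nonneg ξ), h2, Real.sqrt_sq (by positivity)]
  refine ⟨(longSeq u ξ (J+1)).1, ?_, ?_⟩
  · have hn := congrArg norm hP1
    simp only [norm_mul, norm_pow, norm_neg, norm_one, one_pow, hunorm, hξn, hsbn, hcbn] at hn
    norm_num at hn
    -- hn : ‖c‖ * (2 * sinβ * cosβ) = (2 sinβ) * cosβ roughly
    nlinarith [hn, mul_pos hsinβ hcosβ]
  · rw [main (J+1), hQ0]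
    simp
end

section
/- Let E be a complex inner product space, let A and B be orthonormal vectors in E, let θ ∈ ℝ, and let ψ₁ := (sin θ) • A + (cos θ) • B. Let G be the Grover operator on E with marked vector A and reference vector ψ₁. Then for every x ∈ ℝ, G((sin x) • A + (cos x) • B) = (sin (x + 2θ)) • A + (cos (x + 2θ)) • B; that is, one application of G is a rotation by angle 2θ in the plane spanned by A and B. -/
open scoped InnerProductSpace

/-- The Grover operator `G = −(I − 2|ψ₁⟩⟨ψ₁|)(I − 2|A⟩⟨A|)` with marked vector `A`
and reference vector `ψ₁`. -/
noncomputable def groverOp {E : Type*} [NormedAddCommGroup E] [InnerProductSpace ℂ E]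
    (A ψ₁ : E) : E → E := fun w =>
  let w' := w - (2 : ℂ) • ⟪A, w⟫_ℂ • A;
  -(w' - (2 : ℂ) • ⟪ψ₁, w'⟫_ℂ • ψ₁)

/-- One application of the Grover operator is a rotation by angle `2θ` in the plane
spanned by the orthonormal vectors `A` (target superposition) and `B` (non-target
superposition), where `ψ₁ = sin θ • A + cos θ • B`. -/
theorem grover_is_rotation
    {E : Type*} [NormedAddCommGroup E] [InnerProductSpace ℂ E]
    (A B : E) (hA : ‖A‖ = 1) (hB : ‖B‖ = 1) (hAB : ⟪A, B⟫_ℂ = 0)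
    (θ : ℝ) (ψ₁ : E) (hψ₁ : ψ₁ = (Real.sin θ : ℂ) • A + (Real.cos θ : ℂ) • B) :
    ∀ x : ℝ,
      groverOp A ψ₁ ((Real.sin x : ℂ) • A + (Real.cos x : ℂ) • B) =
        (Real.sin (x + 2 * θ) : ℂ) • A + (Real.cos (x + 2 * θ) : ℂ) • B := by
  intro x
  have hAA : ⟪A, A⟫_ℂ = 1 := by
    rw [inner_self_eq_norm_sq_to_K, hA]; norm_num
  have hBB : ⟪B, B⟫_ℂ = 1 := by
    rw [inner_self_eq_norm_sq_to_K, hB]; norm_num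
  have hBA : ⟪B, A⟫_ℂ = 0 := by
    rw [← inner_conj_symm, hAB]; simp
  simp only [groverOp, hψ₁, inner_add_left, inner_add_right, inner_sub_right,
    inner_smul_left, inner_smul_right, hAA, hBB, hAB, hBA, Complex.conj_ofReal,
    mul_one, mul_zero, zero_mul, add_zero, zero_add, one_mul]
  rw [Real.sin_add, Real.cos_add, Real.sin_two_mul, Real.cos_two_mul]
  match_scalars
  · linear_combination (-2*Complex.sin (x:ℂ)) * Complex.sin_sq_add_cos_sq (θ:ℂ)
  · ring
end

section
/- Let E be a complex inner product space, let A and B be orthonormal vectors in E, let θ ∈ ℝ, and let ψ₁ := (sin θ) • A + (cos θ) • B. Let G be the Grover operator on E with marked vector A and reference vector ψ₁. Then for every k ∈ ℕ, G^k ψ₁ = (sin ((2k+1)θ)) • A + (cos ((2k+1)θ)) • B; consequently |⟪A, G^k ψ₁⟫| = |sin((2k+1)θ)|, the success probability of Grover's algorithm after k iterations being sin²((2k+1)θ). -/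
open scoped InnerProductSpace

lemma grover_step {E : Type*} [NormedAddCommGroup E] [InnerProductSpace ℂ E]
    (A B : E) (hA : ‖A‖ = 1) (hB : ‖B‖ = 1) (hAB : ⟪A, B⟫_ℂ = 0)
    (θ φ : ℝ) :
    groverOp A ((Real.sin θ : ℂ) • A + (Real.cos θ : ℂ) • B)
        ((Real.sin φ : ℂ) • A + (Real.cos φ : ℂ) • B)
      = (Real.sin (φ + 2*θ) : ℂ) • A + (Real.cos (φ + 2*θ) : ℂ) • B := by
  have hAA : ⟪A, A⟫_ℂ = 1 := by
    rw [inner_self_eq_norm_sq_to_K, hA]; norm_num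
  have hBB : ⟪B, B⟫_ℂ = 1 := by
    rw [inner_self_eq_norm_sq_to_K, hB]; norm_num
  have hBA : ⟪B, A⟫_ℂ = 0 := by
    rw [← inner_conj_symm, hAB, map_zero]
  simp only [groverOp, inner_add_right, inner_smul_right, inner_sub_right, inner_add_left,
    inner_smul_left, Complex.conj_ofReal, hAA, hBB, hAB, hBA]
  match_scalars
  · push_cast [Complex.sin_add, Complex.cos_add, Complex.sin_two_mul, Complex.cos_two_mul]
    linear_combination (-2 * Complex.sin (φ:ℂ)) * Complex.sin_sq_add_cos_sq (θ:ℂ)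
  · push_cast [Complex.sin_add, Complex.cos_add, Complex.sin_two_mul, Complex.cos_two_mul]
    ring

/-- After `k` Grover iterations starting from `ψ₁ = sin θ • A + cos θ • B`,
the state is `sin((2k+1)θ) • A + cos((2k+1)θ) • B`; consequently the overlap with the
target superposition `A` has absolute value `|sin((2k+1)θ)|` (success probability
`sin²((2k+1)θ)`). -/
theorem grover_iterate
    {E : Type*} [NormedAddCommGroup E] [InnerProductSpace ℂ E]
    (A B : E) (hA : ‖A‖ = 1) (hB : ‖B‖ = 1) (hAB : ⟪A, B⟫_ℂ = 0)
    (θ : ℝ) (ψ₁ : E) (hψ₁ : ψ₁ = (Real.sin θ : ℂ) • A + (Real.cos θ : ℂ) • B) :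
    ∀ k : ℕ,
      (groverOp A ψ₁)^[k] ψ₁ =
          (Real.sin ((2 * k + 1) * θ) : ℂ) • A + (Real.cos ((2 * k + 1) * θ) : ℂ) • B ∧
        ‖⟪A, (groverOp A ψ₁)^[k] ψ₁⟫_ℂ‖ = |Real.sin ((2 * k + 1) * θ)| := by
  have hAA : ⟪A, A⟫_ℂ = 1 := by
    rw [inner_self_eq_norm_sq_to_K, hA]; norm_num
  have key : ∀ k : ℕ, (groverOp A ψ₁)^[k] ψ₁ =
      (Real.sin ((2 * k + 1) * θ) : ℂ) • A + (Real.cos ((2 * k + 1) * θ) : ℂ) • B := by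
    intro k
    induction k with
    | zero => simp [hψ₁]
    | succ n ih =>
      rw [Function.iterate_succ_apply', ih, hψ₁,
        grover_step A B hA hB hAB θ ((2 * n + 1) * θ)]
      have h1 : (2 * (n : ℝ) + 1) * θ + 2 * θ = (2 * ((n : ℝ) + 1) + 1) * θ := by ring
      rw [h1]
      push_cast
      ring_nf
  intro k
  refine ⟨key k, ?_⟩
  rw [key k, inner_add_right, inner_smul_right, inner_smul_right, hAA, hAB]
  simp only [mul_one, mul_zero, add_zero, Complex.norm_real, Real.norm_eq_abs]
end

section
/- Let θ, φ ∈ ℝ with |sin(φ/2)·sin θ| < 1, and set β := arcsin(sin(φ/2)·sin θ). In the space of 2×2 complex matrices, let e₁ := (1,0)ᵀ, ψ := (sin θ, cos θ)ᵀ, P := ψψᵀ (the rank-one matrix with entries ψᵢψⱼ, which has real entries), and E := e₁e₁ᵀ (the matrix with 1 in the (1,1) entry and 0 elsewhere). Define L := −(I + (e^{iφ}−1)·P) * (I + (e^{iφ}−1)·E). Set n_x := (cos θ / cos β)·cos(φ/2), n_y := (cos θ / cos β)·sin(φ/2), n_z := (sin θ / cos β)·cos(φ/2). Then L = −e^{iφ}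 · ( cos(2β)·I + i·sin(2β)·(n_x·X + n_y·Y + n_z·Z) ), where X = !![0,1;1,0], Y = !![0,−i;i,0], Z = !![1,0;0,−1] are the Pauli matrices. That is, one iteration of Long's operator L, written in the ordered basis (|A⟩, |B⟩) of the plane spanned by the marked state and its orthogonal complement, is −e^{iφ} times a rotation by angle α = 4β about the axis (n_x, n_y, n_z). -/
open Matrix

set_option maxHeartbeats 1000000 in
/-- One iteration of Long's operator `L = −(I + (e^{iφ}−1)|ψ₁⟩⟨ψ₁|)(I + (e^{iφ}−1)|A⟩⟨A|)`,
written in the ordered basis `(|A⟩, |B⟩)` of the two-dimensional invariant subspace,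
is `−e^{iφ}` times a rotation by angle `α = 4β` about the axis `(n_x, n_y, n_z)`. -/
theorem long_operator_is_rotation
    (θ φ : ℝ) (h : |Real.sin (φ / 2) * Real.sin θ| < 1)
    (β nx ny nz : ℝ)
    (hβ : β = Real.arcsin (Real.sin (φ / 2) * Real.sin θ))
    (hnx : nx = (Real.cos θ / Real.cos β) * Real.cos (φ / 2))
    (hny : ny = (Real.cos θ / Real.cos β) * Real.sin (φ / 2))
    (hnz : nz = (Real.sin θ / Real.cos β) * Real.cos (φ / 2))
    (ψ : Fin 2 → ℝ) (hψ : ψ = ![Real.sin θ, Real.cos θ])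
    (P : Matrix (Fin 2) (Fin 2) ℂ) (hP : P = Matrix.of fun i j => ((ψ i * ψ j : ℝ) : ℂ))
    (Eproj : Matrix (Fin 2) (Fin 2) ℂ) (hE : Eproj = !![1, 0; 0, 0])
    (L : Matrix (Fin 2) (Fin 2) ℂ)
    (hL : L = -((1 + (Complex.exp (Complex.I * φ) - 1) • P) *
                (1 + (Complex.exp (Complex.I * φ) - 1) • Eproj)))
    (X Y Z : Matrix (Fin 2) (Fin 2) ℂ)
    (hX : X = !![0, 1; 1, 0])
    (hY : Y = !![0, -Complex.I; Complex.I, 0])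
    (hZ : Z = !![1, 0; 0, -1]) :
    L = (-Complex.exp (Complex.I * φ)) •
        (((Real.cos (2 * β) : ℝ) : ℂ) • (1 : Matrix (Fin 2) (Fin 2) ℂ) +
          (Complex.I * ((Real.sin (2 * β) : ℝ) : ℂ)) •
            (((nx : ℝ) : ℂ) • X + ((ny : ℝ) : ℂ) • Y + ((nz : ℝ) : ℂ) • Z)) := by
  obtain ⟨h1, h2⟩ := abs_lt.mp h
  set a := Real.sin (φ / 2) with ha
  set b := Real.cos (φ / 2) with hb
  set c := Real.sin θ with hc
  set d := Real.cos θ with hd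
  have hab : a ^ 2 + b ^ 2 = 1 := Real.sin_sq_add_cos_sq _
  have hcd : c ^ 2 + d ^ 2 = 1 := Real.sin_sq_add_cos_sq _
  have hsβ : Real.sin β = a * c := by
    rw [hβ]; exact Real.sin_arcsin (by linarith) (by linarith)
  have hcβpos : 0 < Real.cos β := by
    rw [hβ, Real.cos_arcsin]
    apply Real.sqrt_pos.mpr
    nlinarith
  have hcβ : Real.cos β ≠ 0 := ne_of_gt hcβpos
  have hcos2 : Real.cos (2 * β) = 1 - 2 * (a * c) ^ 2 := by
    have hpy := Real.sin_sq_add_cos_sq β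
    rw [Real.cos_two_mul]; nlinarith [hsβ]
  have hsin2 : Real.sin (2 * β) = 2 * (a * c) * Real.cos β := by
    rw [Real.sin_two_mul, hsβ]
  have hx' : Real.sin (2 * β) * nx = 2 * a * c * d * b := by
    rw [hsin2, hnx]; field_simp
  have hy' : Real.sin (2 * β) * ny = 2 * a * c * d * a := by
    rw [hsin2, hny]; field_simp
  have hz' : Real.sin (2 * β) * nz = 2 * a * c * c * b := by
    rw [hsin2, hnz]; field_simp
  have habC : (a : ℂ) ^ 2 + (b : ℂ) ^ 2 = 1 := by exact_mod_cast hab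
  have hcdC : (c : ℂ) ^ 2 + (d : ℂ) ^ 2 = 1 := by exact_mod_cast hcd
  have hX2 : ((Real.sin (2 * β) : ℝ) : ℂ) * (nx : ℂ) = 2 * (a : ℂ) * c * d * b := by
    exact_mod_cast hx'
  have hY2 : ((Real.sin (2 * β) : ℝ) : ℂ) * (ny : ℂ) = 2 * (a : ℂ) * c * d * a := by
    exact_mod_cast hy'
  have hZ2 : ((Real.sin (2 * β) : ℝ) : ℂ) * (nz : ℂ) = 2 * (a : ℂ) * c * c * b := by
    exact_mod_cast hz'
  have hC2 : ((Real.cos (2 * β) : ℝ) : ℂ) = 1 - 2 * ((a : ℂ) * c) ^ 2 := by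
    exact_mod_cast hcos2
  have hcφ : Real.cos φ = b ^ 2 - a ^ 2 := by
    have hφ : φ = 2 * (φ / 2) := by ring
    rw [hφ, Real.cos_two_mul]; nlinarith
  have hsφ : Real.sin φ = 2 * a * b := by
    have hφ : φ = 2 * (φ / 2) := by ring
    rw [hφ, Real.sin_two_mul]
  have hexp : Complex.exp (Complex.I * φ) =
      (b : ℂ) ^ 2 - (a : ℂ) ^ 2 + 2 * a * b * Complex.I := by
    rw [mul_comm, Complex.exp_mul_I, ← Complex.ofReal_cos, ← Complex.ofReal_sin, hcφ, hsφ]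
    push_cast
    ring
  set e := Complex.exp (Complex.I * φ) with he
  subst hL hP hE hX hY hZ hψ
  ext i j
  fin_cases i <;> fin_cases j <;>
    simp only [Matrix.mul_apply, Fin.sum_univ_two, Matrix.add_apply, Matrix.neg_apply,
      Matrix.smul_apply, Matrix.one_apply, Matrix.of_apply, Matrix.cons_val', Matrix.cons_val_zero,
      Matrix.cons_val_one, Matrix.head_cons, Matrix.head_fin_const, Matrix.empty_val',
      Matrix.cons_val_fin_one, smul_eq_mul, Fin.mk_zero, Fin.mk_one, ne_eq, zero_ne_one,
      one_ne_zero, not_false_eq_true, if_true, if_false, Matrix.one_apply_eq, Complex.ofReal_mul]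
  · linear_combination e * hC2 + (e * Complex.I) * hZ2 + (-e * (c : ℂ) ^ 2) * hexp +
      (-e * (c : ℂ) ^ 2) * habC
  · linear_combination (e * Complex.I) * hX2 + (-e * Complex.I ^ 2) * hY2 +
      ((c : ℂ) * d * (2 * (a : ℂ) ^ 2 - 1 + 2 * a * b * Complex.I)) * hexp +
      ((c : ℂ) * d * (-2 * (a : ℂ) ^ 2 - 1 + 2 * a * b * Complex.I)) * habC +
      (4 * (a : ℂ) ^ 2 * b ^ 2 * c * d - 2 * (a : ℂ) ^ 2 * c * d * e) * Complex.I_sq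
  · linear_combination (e * Complex.I) * hX2 + (e * Complex.I ^ 2) * hY2 +
      (-(c : ℂ) * d * e) * hexp + (-(c : ℂ) * d * e) * habC +
      (2 * (a : ℂ) ^ 2 * c * d * e) * Complex.I_sq
  · linear_combination e * hC2 + (-e * Complex.I) * hZ2 +
      ((c : ℂ) ^ 2 * ((b : ℂ) ^ 2 - a ^ 2 - 2 * a * b * Complex.I)) * hexp +
      ((c : ℂ) ^ 2 * (1 + (a : ℂ) ^ 2 + b ^ 2 - e)) * habC + (1 - e) * hcdC +
      (-4 * (a : ℂ) ^ 2 * b ^ 2 * c ^ 2) * Complex.I_sq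
end

section
/- Let U and V be 2×2 complex matrices with V unitary (Vᴴ V = 1) and V * V = U. In the 64×64 complex matrices (six qubits q₁,…,q₆, with q₁,…,q₅ controls and q₆ target, state space ordered as the 6-fold Kronecker product), define: M₁ := I₁₆ ⊗ ctrl V (controlled-V with control q₅, target q₆); M₂ := (C⁴X) ⊗ I₂ (a C⁴X with controls q₁–q₄ and target q₅); M₃ := I₁₆ ⊗ ctrl Vᴴ; M₄ := (C⁴X) ⊗ I₂; M₅ := (I₁₆ − E₄) ⊗ I₂ ⊗ I₂ + E₄ ⊗ I₂ ⊗ V (controlled-V with controls q₁–q₄ and target q₆, acting as identity on q₅), where E₄ is the 16×16 matrix |1111⟩⟨1111|. Then C⁵U = M₅ * M₄ * M₃ * M₂ * M₁ (M₁ applied first). This is the decomposition of the five-controlled gate C⁵U into two C⁴X gates, two singly-controlled V^{±1} gates, and one C⁴V gate. -/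
open Matrix

/-- `n`-qubit computational basis states, the index set of the `n`-fold Kronecker
product of 2×2 matrices in the standard ordering (`2^n` elements). -/
abbrev Qu (n : ℕ) := Fin n → Fin 2

/-- Kronecker product of an `a`-qubit matrix and a `b`-qubit matrix, under the standard
identification of the `(a+b)`-qubit basis with pairs of bases. -/
def qKron {a b : ℕ} (A : Matrix (Qu a) (Qu a) ℂ) (B : Matrix (Qu b) (Qu b) ℂ) :
    Matrix (Qu (a + b)) (Qu (a + b)) ℂ :=
  Matrix.of fun i j =>
    A (fun m => i (Fin.castAdd b m)) (fun m => j (Fin.castAdd b m)) *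
      B (fun m => i (Fin.natAdd a m)) (fun m => j (Fin.natAdd a m))

/-- A 2×2 matrix viewed as a 1-qubit matrix. -/
def lift1 (M : Matrix (Fin 2) (Fin 2) ℂ) : Matrix (Qu 1) (Qu 1) ℂ :=
  Matrix.of fun i j => M (i 0) (j 0)

/-- `E_k = |1…1⟩⟨1…1|` on `k` qubits: a single `1` in the entry indexed by the all-ones
bit string. -/
def allOnes (k : ℕ) : Matrix (Qu k) (Qu k) ℂ :=
  Matrix.single (fun _ => 1) (fun _ => 1) 1

/-- The `k`-controlled gate `C^k M = (1 − E_k) ⊗ 1₂ + E_k ⊗ M`. -/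
def cGate (k : ℕ) (M : Matrix (Fin 2) (Fin 2) ℂ) :
    Matrix (Qu (k + 1)) (Qu (k + 1)) ℂ :=
  qKron ((1 : Matrix (Qu k) (Qu k) ℂ) - allOnes k) (1 : Matrix (Qu 1) (Qu 1) ℂ) +
    qKron (allOnes k) (lift1 M)


def quSplit (a b : ℕ) : Qu (a + b) ≃ Qu a × Qu b where
  toFun k := (fun m => k (Fin.castAdd b m), fun m => k (Fin.natAdd a m))
  invFun p := Fin.append p.1 p.2
  left_inv k := by
    funext m
    refine Fin.addCases (fun t => ?_) (fun t => ?_) m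
    · exact Fin.append_left _ _ t
    · exact Fin.append_right _ _ t
  right_inv p := by
    obtain ⟨u, v⟩ := p
    refine Prod.ext ?_ ?_ <;> funext m
    · exact Fin.append_left u v m
    · exact Fin.append_right u v m

lemma qu_eq_iff {a b : ℕ} (i j : Qu (a + b)) :
    i = j ↔ ((fun m => i (Fin.castAdd b m)) = (fun m => j (Fin.castAdd b m)) ∧
      (fun m => i (Fin.natAdd a m)) = (fun m => j (Fin.natAdd a m))) := by
  constructor
  · rintro rfl; exact ⟨rfl, rfl⟩
  · rintro ⟨h1, h2⟩
    funext m
    refine Fin.addCases (fun t => ?_) (fun t => ?_) m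
    · exact congrFun h1 t
    · exact congrFun h2 t

lemma qKron_mul {a b : ℕ} (A A' : Matrix (Qu a) (Qu a) ℂ) (B B' : Matrix (Qu b) (Qu b) ℂ) :
    qKron A B * qKron A' B' = qKron (A * A') (B * B') := by
  ext i j
  simp only [qKron, Matrix.mul_apply, Matrix.of_apply]
  rw [← Equiv.sum_comp (quSplit a b).symm, Fintype.sum_prod_type, Finset.sum_mul_sum]
  refine Finset.sum_congr rfl fun u _ => Finset.sum_congr rfl fun v _ => ?_
  simp only [quSplit, Equiv.coe_fn_symm_mk]
  simp only [Fin.append_left, Fin.append_right]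
  ring

lemma qKron_one {a b : ℕ} :
    qKron (1 : Matrix (Qu a) (Qu a) ℂ) (1 : Matrix (Qu b) (Qu b) ℂ) = 1 := by
  ext i j
  simp only [qKron, Matrix.of_apply, Matrix.one_apply]
  simp only [qu_eq_iff i j]
  split_ifs <;> simp_all

lemma ite_one_zero_mul {p q r : Prop} [Decidable p] [Decidable q] [Decidable r]
    (h : r ↔ p ∧ q) : (if p then (1:ℂ) else 0) * (if q then 1 else 0) = if r then 1 else 0 := by
  simp only [h]; split_ifs <;> simp_all

lemma qKron_allOnes {a b : ℕ} :
    qKron (allOnes a) (allOnes b) = allOnes (a + b) := by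
  ext i j
  simp only [qKron, Matrix.of_apply, allOnes, Matrix.single, Matrix.of_apply]
  refine ite_one_zero_mul ?_
  rw [qu_eq_iff (fun _ => (1:Fin 2)) i, qu_eq_iff (fun _ => (1:Fin 2)) j]
  tauto

lemma qKron_add_left {a b : ℕ} (A B : Matrix (Qu a) (Qu a) ℂ) (C : Matrix (Qu b) (Qu b) ℂ) :
    qKron (A + B) C = qKron A C + qKron B C := by
  ext i j; simp [qKron, add_mul]

lemma qKron_sub_left {a b : ℕ} (A B : Matrix (Qu a) (Qu a) ℂ) (C : Matrix (Qu b) (Qu b) ℂ) :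
    qKron (A - B) C = qKron A C - qKron B C := by
  ext i j; simp [qKron, sub_mul]

lemma qKron_add_right {a b : ℕ} (A : Matrix (Qu a) (Qu a) ℂ) (B C : Matrix (Qu b) (Qu b) ℂ) :
    qKron A (B + C) = qKron A B + qKron A C := by
  ext i j; simp [qKron, mul_add]

lemma qKron_zero_left {a b : ℕ} (C : Matrix (Qu b) (Qu b) ℂ) :
    qKron (0 : Matrix (Qu a) (Qu a) ℂ) C = 0 := by
  ext i j; simp [qKron]

lemma qKron_assoc (A : Matrix (Qu 4) (Qu 4) ℂ) (B C : Matrix (Qu 1) (Qu 1) ℂ) :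
    qKron (qKron A B) C = qKron A (qKron B C) := by
  have h1 : ∀ m : Fin 4, (Fin.castAdd 1 (Fin.castAdd 1 m) : Fin 6) = Fin.castAdd 2 m := by
    intro m; ext; simp
  have h2 : ∀ m : Fin 1, (Fin.castAdd 1 (Fin.natAdd 4 m) : Fin 6) = Fin.natAdd 4 (Fin.castAdd 1 m) := by
    intro m; ext; simp
  have h3 : ∀ m : Fin 1, (Fin.natAdd 5 m : Fin 6) = Fin.natAdd 4 (Fin.natAdd 1 m) := by
    intro m; ext; simp [Nat.add_assoc]
  ext i j
  simp only [qKron, Matrix.of_apply, h1, h2, h3, mul_assoc]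

lemma lift1_mul (M N : Matrix (Fin 2) (Fin 2) ℂ) :
    lift1 M * lift1 N = lift1 (M * N) := by
  ext i j
  simp only [lift1, Matrix.mul_apply, Matrix.of_apply]
  rw [← Equiv.sum_comp (Equiv.funUnique (Fin 1) (Fin 2)).symm]
  simp [Equiv.funUnique]

lemma lift1_one : lift1 1 = 1 := by
  ext i j
  simp only [lift1, Matrix.one_apply, Matrix.of_apply]
  have : i = j ↔ i 0 = j 0 := by
    constructor
    · rintro rfl; rfl
    · intro h; funext m; rw [Subsingleton.elim m 0]; exact h
  simp only [this]

lemma lift1_sub (M N : Matrix (Fin 2) (Fin 2) ℂ) : lift1 (M - N) = lift1 M - lift1 N := by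
  ext i j; simp [lift1]

lemma lift1_add (M N : Matrix (Fin 2) (Fin 2) ℂ) : lift1 (M + N) = lift1 M + lift1 N := by
  ext i j; simp [lift1]

lemma lift1_zero : lift1 0 = 0 := by
  ext i j; simp [lift1]

lemma allOnes_one : allOnes 1 = lift1 !![0, 0; 0, 1] := by
  ext i j
  simp only [allOnes, Matrix.single, lift1, Matrix.of_apply]
  have hi : ((fun _ => (1:Fin 2)) = i) ↔ i 0 = 1 := by
    constructor
    · rintro rfl; rfl
    · intro h; funext m; rw [Subsingleton.elim m 0]; exact h.symm
  have hj : ((fun _ => (1:Fin 2)) = j) ↔ j 0 = 1 := by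
    constructor
    · rintro rfl; rfl
    · intro h; funext m; rw [Subsingleton.elim m 0]; exact h.symm
  simp only [hi, hj]
  generalize i 0 = x
  generalize j 0 = y
  fin_cases x <;> fin_cases y <;> simp

lemma qKron_sub_right {a b : ℕ} (A : Matrix (Qu a) (Qu a) ℂ) (B C : Matrix (Qu b) (Qu b) ℂ) :
    qKron A (B - C) = qKron A B - qKron A C := by
  ext i j; simp [qKron, mul_sub]

lemma blocks {P Q : Matrix (Qu 4) (Qu 4) ℂ}
    (hQQ : Q * Q = Q) (hQP : Q * P = 0) (hPQ : P * Q = 0) (hPP : P * P = P)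
    (A B A' B' : Matrix (Qu 2) (Qu 2) ℂ) :
    (qKron Q A + qKron P B) * (qKron Q A' + qKron P B') =
      qKron Q (A * A') + qKron P (B * B') := by
  rw [add_mul, mul_add, mul_add, qKron_mul, qKron_mul, qKron_mul, qKron_mul,
    hQQ, hQP, hPQ, hPP, qKron_zero_left, qKron_zero_left]
  abel

/-- Decomposition of the five-controlled gate `C⁵U` (controls `q₁–q₅`, target `q₆`) into
two `C⁴X` gates, two singly-controlled `V^{±1}` gates and one `C⁴V` gate, where
`V² = U` and `V` is unitary:
`C⁵U = M₅ M₄ M₃ M₂ M₁` with `M₁ = I₁₆ ⊗ ctrl V`, `M₂ = M₄ = C⁴X ⊗ I₂`,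
`M₃ = I₁₆ ⊗ ctrl V†`, `M₅ = (I₁₆ − E₄) ⊗ I₂ ⊗ I₂ + E₄ ⊗ I₂ ⊗ V`. -/
theorem c5U_decomposition
    (U V : Matrix (Fin 2) (Fin 2) ℂ) (hVunit : Vᴴ * V = 1) (hVV : V * V = U)
    (M₁ M₂ M₃ M₄ M₅ : Matrix (Qu 6) (Qu 6) ℂ)
    (hM₁ : M₁ = qKron (1 : Matrix (Qu 4) (Qu 4) ℂ) (cGate 1 V))
    (hM₂ : M₂ = qKron (cGate 4 !![0, 1; 1, 0]) (1 : Matrix (Qu 1) (Qu 1) ℂ))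
    (hM₃ : M₃ = qKron (1 : Matrix (Qu 4) (Qu 4) ℂ) (cGate 1 Vᴴ))
    (hM₄ : M₄ = qKron (cGate 4 !![0, 1; 1, 0]) (1 : Matrix (Qu 1) (Qu 1) ℂ))
    (hM₅ : M₅ = qKron ((1 : Matrix (Qu 4) (Qu 4) ℂ) - allOnes 4)
          (qKron (1 : Matrix (Qu 1) (Qu 1) ℂ) (1 : Matrix (Qu 1) (Qu 1) ℂ)) +
        qKron (allOnes 4) (qKron (1 : Matrix (Qu 1) (Qu 1) ℂ) (lift1 V))) :
    cGate 5 U = M₅ * M₄ * M₃ * M₂ * M₁ := by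
  have hVW : V * Vᴴ = 1 := mul_eq_one_comm.mp hVunit
  -- 2×2 facts
  have fin2 : ∀ A B : Matrix (Fin 2) (Fin 2) ℂ,
      (∀ i j : Fin 2, A i j = B i j) → A = B := fun A B h => by ext i j; exact h i j
  have hsub : (1 : Matrix (Fin 2) (Fin 2) ℂ) - !![0,0;0,1] = !![1,0;0,0] := by
    ext i j; fin_cases i <;> fin_cases j <;> simp [Matrix.one_apply]
  have honedec : (1 : Matrix (Fin 2) (Fin 2) ℂ) = !![1,0;0,0] + !![0,0;0,1] := by
    ext i j; fin_cases i <;> fin_cases j <;> simp [Matrix.one_apply]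
  have hq2 : (!![1,0;0,0] : Matrix (Fin 2) (Fin 2) ℂ) * !![1,0;0,0] = !![1,0;0,0] := by
    ext i j; fin_cases i <;> fin_cases j <;> simp [Matrix.mul_apply, Fin.sum_univ_two]
  have hqp : (!![1,0;0,0] : Matrix (Fin 2) (Fin 2) ℂ) * !![0,0;0,1] = 0 := by
    ext i j; fin_cases i <;> fin_cases j <;> simp [Matrix.mul_apply, Fin.sum_univ_two]
  have hpq : (!![0,0;0,1] : Matrix (Fin 2) (Fin 2) ℂ) * !![1,0;0,0] = 0 := by
    ext i j; fin_cases i <;> fin_cases j <;> simp [Matrix.mul_apply, Fin.sum_univ_two]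
  have hpp : (!![0,0;0,1] : Matrix (Fin 2) (Fin 2) ℂ) * !![0,0;0,1] = !![0,0;0,1] := by
    ext i j; fin_cases i <;> fin_cases j <;> simp [Matrix.mul_apply, Fin.sum_univ_two]
  have hxq : (!![0,1;1,0] : Matrix (Fin 2) (Fin 2) ℂ) * !![1,0;0,0] = !![0,0;1,0] := by
    ext i j; fin_cases i <;> fin_cases j <;> simp [Matrix.mul_apply, Fin.sum_univ_two]
  have hxp : (!![0,1;1,0] : Matrix (Fin 2) (Fin 2) ℂ) * !![0,0;0,1] = !![0,1;0,0] := by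
    ext i j; fin_cases i <;> fin_cases j <;> simp [Matrix.mul_apply, Fin.sum_univ_two]
  have hlx : (!![0,0;1,0] : Matrix (Fin 2) (Fin 2) ℂ) * !![0,1;1,0] = !![0,0;0,1] := by
    ext i j; fin_cases i <;> fin_cases j <;> simp [Matrix.mul_apply, Fin.sum_univ_two]
  have hrx : (!![0,1;0,0] : Matrix (Fin 2) (Fin 2) ℂ) * !![0,1;1,0] = !![1,0;0,0] := by
    ext i j; fin_cases i <;> fin_cases j <;> simp [Matrix.mul_apply, Fin.sum_univ_two]
  -- 4-qubit projector facts
  have hPP : allOnes 4 * allOnes 4 = allOnes 4 := by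
    rw [allOnes, Matrix.single_mul_single_same, one_mul]
  have hQP : ((1 : Matrix (Qu 4) (Qu 4) ℂ) - allOnes 4) * allOnes 4 = 0 := by
    rw [sub_mul, one_mul, hPP, sub_self]
  have hPQ : allOnes 4 * ((1 : Matrix (Qu 4) (Qu 4) ℂ) - allOnes 4) = 0 := by
    rw [mul_sub, mul_one, hPP, sub_self]
  have hQQ : ((1 : Matrix (Qu 4) (Qu 4) ℂ) - allOnes 4) * ((1 : Matrix (Qu 4) (Qu 4) ℂ) - allOnes 4)
      = (1 : Matrix (Qu 4) (Qu 4) ℂ) - allOnes 4 := by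
    rw [mul_sub, mul_one, hQP, sub_zero]
  have hone4 : (1 : Matrix (Qu 4) (Qu 4) ℂ) =
      ((1 : Matrix (Qu 4) (Qu 4) ℂ) - allOnes 4) + allOnes 4 := (sub_add_cancel _ _).symm
  -- controlled 1-qubit gates in lift1 normal form
  have hcV : ∀ W : Matrix (Fin 2) (Fin 2) ℂ, cGate 1 W =
      qKron (lift1 !![1,0;0,0]) (lift1 1) + qKron (lift1 !![0,0;0,1]) (lift1 W) := by
    intro W
    rw [cGate, allOnes_one, ← lift1_one, ← lift1_sub, hsub]
  -- block normal forms of the five gates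
  have hM₁' : M₁ = qKron ((1 : Matrix (Qu 4) (Qu 4) ℂ) - allOnes 4)
        (qKron (lift1 !![1,0;0,0]) (lift1 1) + qKron (lift1 !![0,0;0,1]) (lift1 V)) +
      qKron (allOnes 4)
        (qKron (lift1 !![1,0;0,0]) (lift1 1) + qKron (lift1 !![0,0;0,1]) (lift1 V)) := by
    rw [hM₁, hcV V]
    nth_rewrite 1 [hone4]
    rw [qKron_add_left]
  have hM₃' : M₃ = qKron ((1 : Matrix (Qu 4) (Qu 4) ℂ) - allOnes 4)
        (qKron (lift1 !![1,0;0,0]) (lift1 1) + qKron (lift1 !![0,0;0,1]) (lift1 Vᴴ)) +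
      qKron (allOnes 4)
        (qKron (lift1 !![1,0;0,0]) (lift1 1) + qKron (lift1 !![0,0;0,1]) (lift1 Vᴴ)) := by
    rw [hM₃, hcV Vᴴ]
    nth_rewrite 1 [hone4]
    rw [qKron_add_left]
  have hM₂' : M₂ = qKron ((1 : Matrix (Qu 4) (Qu 4) ℂ) - allOnes 4)
        (qKron (lift1 1) (lift1 1)) +
      qKron (allOnes 4) (qKron (lift1 !![0,1;1,0]) (lift1 1)) := by
    rw [hM₂, cGate, qKron_add_left, qKron_assoc, qKron_assoc, ← lift1_one]
  have hM₄' : M₄ = qKron ((1 : Matrix (Qu 4) (Qu 4) ℂ) - allOnes 4)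
        (qKron (lift1 1) (lift1 1)) +
      qKron (allOnes 4) (qKron (lift1 !![0,1;1,0]) (lift1 1)) := by
    rw [hM₄, cGate, qKron_add_left, qKron_assoc, qKron_assoc, ← lift1_one]
  have hM₅' : M₅ = qKron ((1 : Matrix (Qu 4) (Qu 4) ℂ) - allOnes 4)
        (qKron (lift1 1) (lift1 1)) +
      qKron (allOnes 4) (qKron (lift1 1) (lift1 V)) := by
    rw [hM₅, ← lift1_one]
  rw [hM₁', hM₂', hM₃', hM₄', hM₅',
    blocks hQQ hQP hPQ hPP, blocks hQQ hQP hPQ hPP, blocks hQQ hQP hPQ hPP,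
    blocks hQQ hQP hPQ hPP]
  -- compute the 2-qubit chains
  have hAchain : qKron (lift1 (1 : Matrix (Fin 2) (Fin 2) ℂ)) (lift1 1) * qKron (lift1 1) (lift1 1) *
      (qKron (lift1 !![1,0;0,0]) (lift1 1) + qKron (lift1 !![0,0;0,1]) (lift1 Vᴴ)) *
      qKron (lift1 1) (lift1 1) *
      (qKron (lift1 !![1,0;0,0]) (lift1 1) + qKron (lift1 !![0,0;0,1]) (lift1 V)) =
      qKron (lift1 !![1,0;0,0]) (lift1 1) + qKron (lift1 !![0,0;0,1]) (lift1 1) := by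
    simp only [mul_add, add_mul, qKron_mul, lift1_mul, one_mul, mul_one,
      hq2, hqp, hpq, hpp, hVunit, lift1_zero, qKron_zero_left, add_zero, zero_add]
  have hBchain : qKron (lift1 (1 : Matrix (Fin 2) (Fin 2) ℂ)) (lift1 V) *
      qKron (lift1 !![0,1;1,0]) (lift1 1) *
      (qKron (lift1 !![1,0;0,0]) (lift1 1) + qKron (lift1 !![0,0;0,1]) (lift1 Vᴴ)) *
      qKron (lift1 !![0,1;1,0]) (lift1 1) *
      (qKron (lift1 !![1,0;0,0]) (lift1 1) + qKron (lift1 !![0,0;0,1]) (lift1 V)) =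
      qKron (lift1 !![1,0;0,0]) (lift1 1) + qKron (lift1 !![0,0;0,1]) (lift1 U) := by
    simp only [mul_add, add_mul, qKron_mul, lift1_mul, one_mul, mul_one,
      hxq, hxp, hlx, hrx, hq2, hqp, hpq, hpp, hVW, hVV, lift1_zero, qKron_zero_left,
      add_zero, zero_add]
    try abel
  rw [hAchain, hBchain]
  -- expand the left-hand side
  have h5 : allOnes 5 = qKron (allOnes 4) (allOnes 1) := (qKron_allOnes (a := 4) (b := 1)).symm
  have hone5 : (1 : Matrix (Qu 5) (Qu 5) ℂ) =
      qKron (1 : Matrix (Qu 4) (Qu 4) ℂ) (1 : Matrix (Qu 1) (Qu 1) ℂ) := (qKron_one (a := 4) (b := 1)).symm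
  rw [cGate, h5, hone5, qKron_sub_left, qKron_assoc, qKron_assoc, qKron_assoc,
    allOnes_one, ← lift1_one]
  -- reduce both sides to a common linear normal form
  have hQ2 : (!![1,0;0,0] : Matrix (Fin 2) (Fin 2) ℂ) = 1 - !![0,0;0,1] := hsub.symm
  simp only [hQ2, lift1_sub, lift1_one, qKron_sub_left, qKron_sub_right,
    qKron_add_left, qKron_add_right, sub_mul, mul_sub]
  abel
end

section
/- Let W and K be 2×2 complex matrices with K unitary (Kᴴ K = 1) and K⁴ = W. In the 16×16 complex matrices (four qubits q₁, q₂, q₃ controls and q₄ target), the triply-controlled gate C³W equals the product of the following thirteen gates applied in circuit order (first gate applied first, i.e., the matrix product has the first-listed gate rightmost): ctrlK(q₁→q₄); CNOT(q₁→q₂); ctrlK†(q₂→q₄); CNOT(q₁→q₂); ctrlK(q₂→q₄); CNOT(q₂→q₃); ctrlK†(q₃→q₄); CNOT(q₁→q₃); ctrlK(q₃→q₄); CNOT(q₂→q₃); ctrlK†(q₃→q₄); CNOT(q₁→q₃); ctrlK(q₃→q₄). Here ctrlK(q_i→q₄) is the two-qubit controlled-K with control the i-th tensor factor and target the fourth (tensored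 with identity on the remaining factors), K† := Kᴴ, and CNOT(q_i→q_j) is the controlled-X with control q_i and target q_j. Thus C³W decomposes into 7 singly-controlled K^{±1} gates and 6 CNOT gates (13 two-qubit gates in total). -/
open Matrix

/-- The Pauli-X gate. -/
def Xg : Matrix (Fin 2) (Fin 2) ℂ := !![0, 1; 1, 0]

/-- A two-qubit controlled-`M` with control `q₁` and target `q₄` on four qubits:
`|0⟩⟨0| ⊗ I₈ + |1⟩⟨1| ⊗ I₄ ⊗ M`. -/
def ctrl14 (M : Matrix (Fin 2) (Fin 2) ℂ) : Matrix (Qu 4) (Qu 4) ℂ :=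
  qKron (lift1 !![1, 0; 0, 0]) (1 : Matrix (Qu 3) (Qu 3) ℂ) +
    qKron (lift1 !![0, 0; 0, 1]) (qKron (1 : Matrix (Qu 2) (Qu 2) ℂ) (lift1 M))

/-- A two-qubit controlled-`M` with control `q₂` and target `q₄` on four qubits. -/
def ctrl24 (M : Matrix (Fin 2) (Fin 2) ℂ) : Matrix (Qu 4) (Qu 4) ℂ :=
  qKron (1 : Matrix (Qu 1) (Qu 1) ℂ)
    (qKron (lift1 !![1, 0; 0, 0]) (1 : Matrix (Qu 2) (Qu 2) ℂ) +
      qKron (lift1 !![0, 0; 0, 1]) (qKron (1 : Matrix (Qu 1) (Qu 1) ℂ) (lift1 M)))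

/-- A two-qubit controlled-`M` with control `q₃` and target `q₄` on four qubits. -/
def ctrl34 (M : Matrix (Fin 2) (Fin 2) ℂ) : Matrix (Qu 4) (Qu 4) ℂ :=
  qKron (1 : Matrix (Qu 2) (Qu 2) ℂ) (cGate 1 M)

/-- CNOT with control `q₁` and target `q₂` on four qubits. -/
def cnot12 : Matrix (Qu 4) (Qu 4) ℂ :=
  qKron (cGate 1 Xg) (1 : Matrix (Qu 2) (Qu 2) ℂ)

/-- CNOT with control `q₂` and target `q₃` on four qubits. -/
def cnot23 : Matrix (Qu 4) (Qu 4) ℂ :=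
  qKron (1 : Matrix (Qu 1) (Qu 1) ℂ) (qKron (cGate 1 Xg) (1 : Matrix (Qu 1) (Qu 1) ℂ))

/-- CNOT with control `q₁` and target `q₃` on four qubits. -/
def cnot13 : Matrix (Qu 4) (Qu 4) ℂ :=
  qKron
    (qKron (lift1 !![1, 0; 0, 0]) (1 : Matrix (Qu 2) (Qu 2) ℂ) +
      qKron (lift1 !![0, 0; 0, 1]) (qKron (1 : Matrix (Qu 1) (Qu 1) ℂ) (lift1 Xg)))
    (1 : Matrix (Qu 1) (Qu 1) ℂ)


section Aux

set_option maxRecDepth 10000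
set_option linter.unnecessarySeqFocus false
set_option linter.unusedTactic false

section IdxLemmas
@[simp] lemma ca3 : (Fin.castAdd 3 (0:Fin 1) : Fin 4) = 0 := rfl
@[simp] lemma na1_0 : (Fin.natAdd 1 (0:Fin 3) : Fin 4) = 1 := rfl
@[simp] lemma na1_1 : (Fin.natAdd 1 (1:Fin 3) : Fin 4) = 2 := rfl
@[simp] lemma na1_2 : (Fin.natAdd 1 (2:Fin 3) : Fin 4) = 3 := rfl
@[simp] lemma ca1_0 : (Fin.castAdd 1 (0:Fin 3) : Fin 4) = 0 := rfl
@[simp] lemma ca1_1 : (Fin.castAdd 1 (1:Fin 3) : Fin 4) = 1 := rfl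
@[simp] lemma ca1_2 : (Fin.castAdd 1 (2:Fin 3) : Fin 4) = 2 := rfl
@[simp] lemma na3_0 : (Fin.natAdd 3 (0:Fin 1) : Fin 4) = 3 := rfl
@[simp] lemma ca2_0 : (Fin.castAdd 2 (0:Fin 2) : Fin 4) = 0 := rfl
@[simp] lemma ca2_1 : (Fin.castAdd 2 (1:Fin 2) : Fin 4) = 1 := rfl
@[simp] lemma na2_0 : (Fin.natAdd 2 (0:Fin 2) : Fin 4) = 2 := rfl
@[simp] lemma na2_1 : (Fin.natAdd 2 (1:Fin 2) : Fin 4) = 3 := rfl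
@[simp] lemma q3ca1_0 : (Fin.castAdd 1 (0:Fin 2) : Fin 3) = 0 := rfl
@[simp] lemma q3ca1_1 : (Fin.castAdd 1 (1:Fin 2) : Fin 3) = 1 := rfl
@[simp] lemma q3na2 : (Fin.natAdd 2 (0:Fin 1) : Fin 3) = 2 := rfl
@[simp] lemma q3ca2 : (Fin.castAdd 2 (0:Fin 1) : Fin 3) = 0 := rfl
@[simp] lemma q3na1_0 : (Fin.natAdd 1 (0:Fin 2) : Fin 3) = 1 := rfl
@[simp] lemma q3na1_1 : (Fin.natAdd 1 (1:Fin 2) : Fin 3) = 2 := rfl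
@[simp] lemma q2ca1 : (Fin.castAdd 1 (0:Fin 1) : Fin 2) = 0 := rfl
@[simp] lemma q2na1 : (Fin.natAdd 1 (0:Fin 1) : Fin 2) = 1 := rfl
@[simp] lemma an4_0 : ((0:Fin 3).addNat 1 : Fin 4) = 1 := rfl
@[simp] lemma an4_1 : ((1:Fin 3).addNat 1 : Fin 4) = 2 := rfl
@[simp] lemma an4_2 : ((2:Fin 3).addNat 1 : Fin 4) = 3 := rfl
@[simp] lemma an4_3 : ((0:Fin 2).addNat 2 : Fin 4) = 2 := rfl
@[simp] lemma an4_4 : ((1:Fin 2).addNat 2 : Fin 4) = 3 := rfl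
@[simp] lemma an4_5 : ((0:Fin 1).addNat 3 : Fin 4) = 3 := rfl
@[simp] lemma an3_0 : ((0:Fin 2).addNat 1 : Fin 3) = 1 := rfl
@[simp] lemma an3_1 : ((1:Fin 2).addNat 1 : Fin 3) = 2 := rfl
@[simp] lemma an3_2 : ((0:Fin 1).addNat 2 : Fin 3) = 2 := rfl
@[simp] lemma an2_0 : ((0:Fin 1).addNat 1 : Fin 2) = 1 := rfl
end IdxLemmas

lemma three_eq_last : (3 : Fin 4) = Fin.last 3 := rfl

lemma snoc_three (c : Qu 3) (t : Fin 2) : (Fin.snoc c t : Qu 4) 3 = t := by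
  rw [three_eq_last]; exact Fin.snoc_last (α := fun _ => Fin 2) (p := c) t

lemma init4 (a b c d : Fin 2) : Fin.init ![a,b,c,d] = ![a,b,c] := by
  funext m; fin_cases m <;> rfl

lemma eta4 (i : Qu 4) : ∃ a b c d, i = ![a,b,c,d] :=
  ⟨i 0, i 1, i 2, i 3, by funext m; fin_cases m <;> rfl⟩

lemma eta3 (c : Qu 3) : ∃ x y z, c = ![x,y,z] :=
  ⟨c 0, c 1, c 2, by funext m; fin_cases m <;> rfl⟩

/-- Controlled-gate normal form on 4 qubits: a permutation-like action `f` on the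
three control bits and a block `g` on the target qubit. -/
noncomputable def G (f : Qu 3 → Qu 3) (g : Qu 3 → Matrix (Fin 2) (Fin 2) ℂ) :
    Matrix (Qu 4) (Qu 4) ℂ :=
  Matrix.of fun i j =>
    if Fin.init i = f (Fin.init j) then g (Fin.init j) (i 3) (j 3) else 0

def quE : (Fin 2 × Qu 3) ≃ Qu 4 where
  toFun p := Fin.snoc p.2 p.1
  invFun i := (i 3, Fin.init i)
  left_inv p := by simp [snoc_three, Fin.init_snoc]
  right_inv i := by rw [three_eq_last]; exact Fin.snoc_init_self (α := fun _ => Fin 2) i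

lemma G_mul (f₁ f₂ : Qu 3 → Qu 3) (g₁ g₂ : Qu 3 → Matrix (Fin 2) (Fin 2) ℂ) :
    G f₁ g₁ * G f₂ g₂ = G (f₁ ∘ f₂) (fun c => g₁ (f₂ c) * g₂ c) := by
  ext i j
  rw [Matrix.mul_apply, ← quE.sum_comp, Fintype.sum_prod_type]
  simp only [G, Matrix.of_apply, quE, Equiv.coe_fn_mk, Fin.init_snoc, snoc_three]
  rw [Finset.sum_comm]
  simp only [mul_ite, ite_mul, zero_mul, mul_zero]
  simp only [Finset.sum_ite_irrel, Finset.sum_const_zero]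
  rw [Finset.sum_ite_eq' Finset.univ (f₂ (Fin.init j))]
  simp only [Finset.mem_univ, if_true, Function.comp]
  split
  · rw [Matrix.mul_apply]
  · simp

def f12 (c : Qu 3) : Qu 3 := ![c 0, c 0 + c 1, c 2]
def f23 (c : Qu 3) : Qu 3 := ![c 0, c 1, c 1 + c 2]
def f13 (c : Qu 3) : Qu 3 := ![c 0, c 1, c 0 + c 2]

lemma ctrl14_eq (M : Matrix (Fin 2) (Fin 2) ℂ) :
    ctrl14 M = G id (fun c => if c 0 = 1 then M else 1) := by
  ext i j
  obtain ⟨a,b,c,d,rfl⟩ := eta4 i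
  obtain ⟨a',b',c',d',rfl⟩ := eta4 j
  simp [ctrl14, G, qKron, lift1, Matrix.one_apply, init4, funext_iff,
    Fin.forall_fin_succ, Fin.forall_fin_one]
  fin_cases a <;> fin_cases a' <;> simp_all [Matrix.one_apply] <;> (try rfl) <;>
    (split_ifs <;> simp_all) <;> intros <;> exact if_neg (by tauto)

lemma ctrl24_eq (M : Matrix (Fin 2) (Fin 2) ℂ) :
    ctrl24 M = G id (fun c => if c 1 = 1 then M else 1) := by
  ext i j
  obtain ⟨a,b,c,d,rfl⟩ := eta4 i
  obtain ⟨a',b',c',d',rfl⟩ := eta4 j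
  simp [ctrl24, G, qKron, lift1, Matrix.one_apply, init4, funext_iff,
    Fin.forall_fin_succ, Fin.forall_fin_one]
  fin_cases b <;> fin_cases b' <;> simp_all [Matrix.one_apply] <;> (try rfl) <;>
    (split_ifs <;> simp_all) <;> intros <;> exact if_neg (by tauto)

lemma ctrl34_eq (M : Matrix (Fin 2) (Fin 2) ℂ) :
    ctrl34 M = G id (fun c => if c 2 = 1 then M else 1) := by
  ext i j
  obtain ⟨a,b,c,d,rfl⟩ := eta4 i
  obtain ⟨a',b',c',d',rfl⟩ := eta4 j
  simp [ctrl34, G, qKron, lift1, cGate, allOnes, Matrix.single,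
    Matrix.one_apply, init4, funext_iff, Fin.forall_fin_succ, Fin.forall_fin_one]
  fin_cases c <;> fin_cases c' <;> simp_all [Matrix.one_apply] <;> (try rfl) <;>
    (split_ifs <;> simp_all)

lemma cnot12_eq : cnot12 = G f12 (fun _ => 1) := by
  ext i j
  obtain ⟨a,b,c,d,rfl⟩ := eta4 i
  obtain ⟨a',b',c',d',rfl⟩ := eta4 j
  simp [cnot12, G, f12, qKron, lift1, cGate, allOnes, Xg, Matrix.single,
    Matrix.one_apply, init4, funext_iff, Fin.forall_fin_succ, Fin.forall_fin_one]
  fin_cases a <;> fin_cases a' <;> fin_cases b <;> fin_cases b' <;>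
    simp_all [Matrix.one_apply] <;> (try rfl) <;> (split_ifs <;> simp_all)

lemma cnot23_eq : cnot23 = G f23 (fun _ => 1) := by
  ext i j
  obtain ⟨a,b,c,d,rfl⟩ := eta4 i
  obtain ⟨a',b',c',d',rfl⟩ := eta4 j
  simp [cnot23, G, f23, qKron, lift1, cGate, allOnes, Xg, Matrix.single,
    Matrix.one_apply, init4, funext_iff, Fin.forall_fin_succ, Fin.forall_fin_one]
  fin_cases b <;> fin_cases b' <;> fin_cases c <;> fin_cases c' <;>
    simp_all [Matrix.one_apply] <;> (try rfl) <;> (split_ifs <;> simp_all)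

lemma cnot13_eq : cnot13 = G f13 (fun _ => 1) := by
  ext i j
  obtain ⟨a,b,c,d,rfl⟩ := eta4 i
  obtain ⟨a',b',c',d',rfl⟩ := eta4 j
  simp [cnot13, G, f13, qKron, lift1, Xg, Matrix.one_apply, init4, funext_iff,
    Fin.forall_fin_succ, Fin.forall_fin_one]
  fin_cases a <;> fin_cases a' <;> fin_cases c <;> fin_cases c' <;>
    simp_all [Matrix.one_apply] <;> (try rfl) <;> (split_ifs <;> simp_all)

lemma cGate3_eq (M : Matrix (Fin 2) (Fin 2) ℂ) :
    cGate 3 M = G id (fun c => if c 0 = 1 ∧ c 1 = 1 ∧ c 2 = 1 then M else 1) := by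
  ext i j
  obtain ⟨a,b,c,d,rfl⟩ := eta4 i
  obtain ⟨a',b',c',d',rfl⟩ := eta4 j
  simp [cGate, allOnes, Matrix.single, G, qKron, lift1, Matrix.one_apply,
    Matrix.sub_apply, init4, funext_iff, Fin.forall_fin_succ, Fin.forall_fin_one]
  fin_cases a <;> fin_cases a' <;> fin_cases b <;> fin_cases b' <;>
    fin_cases c <;> fin_cases c' <;>
    simp_all [Matrix.one_apply] <;> (try rfl) <;> (split_ifs <;> simp_all)

end Aux

/-- The gray-code decomposition of the triply-controlled gate `C³W` (controls
`q₁, q₂, q₃`, target `q₄`) into 7 singly-controlled `K^{±1}` gates and 6 CNOTs, where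
`K` is unitary and `K⁴ = W`; the first gate of the circuit is the rightmost factor:
ctrlK(q₁→q₄); CNOT(q₁→q₂); ctrlK†(q₂→q₄); CNOT(q₁→q₂); ctrlK(q₂→q₄); CNOT(q₂→q₃);
ctrlK†(q₃→q₄); CNOT(q₁→q₃); ctrlK(q₃→q₄); CNOT(q₂→q₃); ctrlK†(q₃→q₄); CNOT(q₁→q₃);
ctrlK(q₃→q₄). -/
theorem c3W_decomposition
    (W K : Matrix (Fin 2) (Fin 2) ℂ) (hKunit : Kᴴ * K = 1) (hK4 : K ^ 4 = W) :
    cGate 3 W =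
      ctrl34 K * cnot13 * ctrl34 Kᴴ * cnot23 * ctrl34 K * cnot13 * ctrl34 Kᴴ *
        cnot23 * ctrl24 K * cnot12 * ctrl24 Kᴴ * cnot12 * ctrl14 K := by
  have hK1 : K * Kᴴ = 1 := mul_eq_one_comm.mp hKunit
  rw [cGate3_eq]
  simp only [ctrl34_eq, ctrl24_eq, ctrl14_eq, cnot12_eq, cnot23_eq, cnot13_eq, G_mul]
  have hF : (id ∘ f13 ∘ id ∘ f23 ∘ id ∘ f13 ∘ id ∘ f23 ∘ id ∘ f12 ∘ id ∘ f12 : Qu 3 → Qu 3)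
      = id := by
    funext c
    obtain ⟨x,y,z,rfl⟩ := eta3 c
    fin_cases x <;> fin_cases y <;> fin_cases z <;> rfl
  rw [show ((((((((((((id ∘ f13) ∘ id) ∘ f23) ∘ id) ∘ f13) ∘ id) ∘ f23) ∘ id) ∘ f12) ∘ id)
      ∘ f12) ∘ id : Qu 3 → Qu 3) = id from hF]
  refine congrArg (G id) ?_
  funext c
  obtain ⟨x,y,z,rfl⟩ := eta3 c
  fin_cases x <;> fin_cases y <;> fin_cases z <;>
    simp [f12, f13, f23, hKunit, hK1, Matrix.mul_assoc, ← hK4, pow_succ]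
end
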